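/- arXiv:2212.03439 — 6 statements merged into one kernel-verified Lean document; each statement's English description precedes it below -/
import Mathlib

section
/- Let λ be a k-strict partition of length m with λ₀ := n+k+1, and define a pair (i,j), 0 ≤ i < j ≤ m, to be big if λ_i + λ_j ≥ 2k+1+j-i. Then for any 1 ≤ j ≤ m, there exists a unique integer a with 0 ≤ a < j such that (i,j) is big for all 0 ≤ i ≤ a, and (t,j) is not big for all a+1 ≤ t < j. -/
/-- A pair `(i,j)` with `i < j` is *big* for `λ` if `λ_i + λ_j ≥ 2k + 1 + (j - i)`. -/
def IsBigPair (k : ℕ) (lam : ℕ → ℕ) (i j : ℕ) : Prop :=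
  2 * k + 1 + (j - i) ≤ lam i + lam j

/-- Let `λ` be a `k`-strict partition of length `m` with the convention `λ₀ = n + k + 1`.
Then for any `1 ≤ j ≤ m`, there is a unique integer `a` with `0 ≤ a < j` such that
`(i,j)` is big for all `0 ≤ i ≤ a` and `(t,j)` is not big for all `a + 1 ≤ t < j`. -/
theorem stmt_1 (n k m : ℕ) (hm : m = n - k) (hkn : k ≤ n) (lam : ℕ → ℕ)
    (hlam0 : lam 0 = n + k + 1)
    (hdec : ∀ i j, 1 ≤ i → i ≤ j → j ≤ m → lam j ≤ lam i)
    (hstrict : ∀ j, 1 ≤ j → j < m → k < lam j → lam (j + 1) < lam j)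
    (j : ℕ) (hj1 : 1 ≤ j) (hjm : j ≤ m) :
    ∃! a : ℕ, a < j ∧ (∀ i ≤ a, IsBigPair k lam i j) ∧
      (∀ t, a + 1 ≤ t → t < j → ¬ IsBigPair k lam t j) := by
  classical
  have hbig0 : IsBigPair k lam 0 j := by
    unfold IsBigPair
    have hjn : j ≤ n - k := hm ▸ hjm
    omega
  -- bigness is downward closed in the first coordinate
  have hdc : ∀ i i', i' ≤ i → i < j → IsBigPair k lam i j → IsBigPair k lam i' j := by
    intro i i' hii hij hbig
    rcases Nat.eq_zero_or_pos i' with h0 | h1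
    · subst h0; exact hbig0
    · have hi1 : 1 ≤ i := le_trans h1 hii
      have hlj : lam j ≤ lam i := hdec i j hi1 (le_of_lt hij) hjm
      have hki : k < lam i := by
        unfold IsBigPair at hbig; omega
      have haux : ∀ d t, 1 ≤ t → t + d = i → lam i + d ≤ lam t := by
        intro d
        induction d with
        | zero =>
          intro t _ h
          have : t = i := by omega
          subst this; omega
        | succ d ih =>
          intro t ht h
          have h1 : lam i + d ≤ lam (t + 1) := ih (t + 1) (by omega) (by omega)
          have hkt : k < lam t := by
            have := hdec t i ht (by omega) (by omega)
            omega
          have hs := hstrict t ht (by omega) hkt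
          omega
      have hmain : lam i + (i - i') ≤ lam i' := haux (i - i') i' h1 (by omega)
      unfold IsBigPair at hbig ⊢
      omega
  set P : ℕ → Prop := fun i => IsBigPair k lam i j with hP
  have hdp : DecidablePred P := Classical.decPred P
  set a := Nat.findGreatest P (j - 1) with ha
  have haj : a < j := by
    have := Nat.findGreatest_le (P := P) (j - 1)
    omega
  have hPa : P a := Nat.findGreatest_spec (Nat.zero_le _) hbig0
  refine ⟨a, ⟨haj, ?_, ?_⟩, ?_⟩
  · intro i hi
    exact hdc a i hi haj hPa
  · intro t ht htj hbig
    exact Nat.findGreatest_is_greatest (P := P) (n := j - 1) (by omega) (by omega) hbig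
  · rintro b ⟨hbj, hball, hbnot⟩
    by_contra hne
    rcases Nat.lt_or_ge b a with hlt | hge
    · -- b < a : then (b+1, j) is big (since b+1 ≤ a) but b's property forbids it
      exact hbnot (b + 1) le_rfl (by omega) (hdc a (b + 1) (by omega) haj hPa)
    · have hlt : a < b := by omega
      have : IsBigPair k lam (a + 1) j := hball (a + 1) (by omega)
      exact Nat.findGreatest_is_greatest (P := P) (n := j - 1) (by omega) (by omega) this
end

section
/- Let n > m ≥ 1 be integers, k = n - m, and let λ, μ be k-strict partitions with m parts each, with all parts at most n+k. Define f(λ,j) = j - 1 - #{i < j : λ_i + λ_j ≤ 2k + j - i}. If |λ| + |μ| < 2n, then for all j ∈ [1,m], f(λ, m+1-j) + f(μ, j) ≤ n + k - λ_{m+1-j} - μ_j. -/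
/-!
Fix `λ` and `j ≤ m` and call `(i, j)` big when `λ_i + λ_j > 2k + j - i`. The big indices `i < j`
form an initial segment `{1, …, F}` with `F = f(λ, j)`: a big pair has `λ_i > k` or `λ_j > k`,
hence `λ_{i-1} > k`, and k-strictness gives `λ_{i-1} > λ_i`, so `(i - 1, j)` is big as well.
Thus `(F, j)` is big when `F > 0`, and `|λ| ≥ F λ_F + (j - F) λ_j ≥ F + λ_j + j - 1` unless
`F = λ_j = 0`. For `(λ, m + 1 - j)` and `(μ, j)` these two bounds add up to the claim. If one
side vanishes, the claim fails only if the other side has `f(μ, j) + μ_j > n + k`, and then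
`|μ| ≥ j μ_j ≥ 2(n + k)`.
-/

/-- `f(λ,j) = j - 1 - #{i : 1 ≤ i < j, λ_i + λ_j ≤ 2k + j - i}`, the number of "big"
pairs `(i,j)` with `i < j` (odd orthogonal case, where `2k = N - 2m - 1`). -/
def fCount (k : ℕ) (lam : ℕ → ℕ) (j : ℕ) : ℕ :=
  j - 1 - ((Finset.Ico 1 j).filter fun i => lam i + lam j ≤ 2 * k + j - i).card

open Finset

theorem Icc_one_subset_of_mem {S : Finset ℕ} (hS : ∀ i ∈ S, 2 ≤ i → i - 1 ∈ S) :
    ∀ s ∈ S, Icc 1 s ⊆ S := by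
  intro s
  induction s with
  | zero => simp
  | succ s ih =>
    intro hs i hi
    obtain ⟨h1, hi⟩ := mem_Icc.1 hi
    rcases hi.lt_or_eq with hlt | rfl
    · exact ih (hS _ hs (by omega)) (mem_Icc.2 ⟨h1, by omega⟩)
    · exact hs

theorem eq_Icc_one_card {S : Finset ℕ} (hpos : ∀ i ∈ S, 1 ≤ i)
    (hS : ∀ i ∈ S, 2 ≤ i → i - 1 ∈ S) : S = Icc 1 #S := by
  refine eq_of_subset_of_card_le (fun s hs => mem_Icc.2 ⟨hpos s hs, ?_⟩) (by simp)
  simpa using card_le_card (Icc_one_subset_of_mem hS s hs)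

theorem add_add_le_mul_add_mul_add_one {k J F A L : ℕ} (hk : 0 < k) (hFJ : F < J)
    (hL : 0 < F → A ≤ L ∧ 2 * k + J < L + A + F) (hpos : 0 < F + A) :
    F + A + J ≤ F * L + (J - F) * A + 1 := by
  obtain ⟨r, rfl⟩ := Nat.exists_eq_add_of_lt hFJ
  rw [show F + r + 1 - F = r + 1 by omega]
  rcases F.eq_zero_or_pos with rfl | hF
  · nlinarith
  obtain ⟨hAL, hbig⟩ := hL hF
  rcases le_or_gt 2 A with hA | hA
  · nlinarith
  · interval_cases A <;> nlinarith

theorem add_le_of_mul_lt_two_mul {j G B c : ℕ} (hGj : G < j) (hjc : j ≤ c) (hBc : B ≤ c)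
    (h : j * B < 2 * c) : G + B ≤ c := by
  by_contra! hcon
  obtain ⟨a, rfl⟩ : ∃ a, j = a + 2 := ⟨j - 2, by omega⟩
  obtain ⟨b, rfl⟩ := Nat.exists_eq_add_of_le hjc
  nlinarith

theorem mul_add_mul_le_sum {m : ℕ} {lam : ℕ → ℕ} (hanti : AntitoneOn lam (Set.Icc 1 m))
    {i j : ℕ} (hij : i ≤ j) (hjm : j ≤ m) :
    i * lam i + (j - i) * lam j ≤ ∑ t ∈ Icc 1 m, lam t := by
  have hle : ∀ a b, b ≤ m → ∀ t ∈ Ioc a b, lam b ≤ lam t := by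
    intro a b hb t ht
    rw [mem_Ioc] at ht
    exact hanti ⟨by omega, by omega⟩ ⟨by omega, hb⟩ ht.2
  calc i * lam i + (j - i) * lam j
      ≤ ∑ t ∈ Ioc 0 i, lam t + ∑ t ∈ Ioc i j, lam t := by
        gcongr
        · simpa using card_nsmul_le_sum _ lam _ (hle 0 i (hij.trans hjm))
        · simpa using card_nsmul_le_sum _ lam _ (hle i j hjm)
    _ = ∑ t ∈ Icc 1 j, lam t := by
        rw [sum_Ioc_consecutive _ (Nat.zero_le i) hij]; rfl
    _ ≤ ∑ t ∈ Icc 1 m, lam t := sum_le_sum_of_subset (Icc_subset_Icc_right hjm)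

def bigPairs (k : ℕ) (lam : ℕ → ℕ) (j : ℕ) : Finset ℕ :=
  (Ico 1 j).filter fun i => 2 * k + j - i < lam i + lam j

theorem fCount_eq_card_bigPairs (k : ℕ) (lam : ℕ → ℕ) (j : ℕ) :
    fCount k lam j = #(bigPairs k lam j) := by
  have h := card_filter_add_card_filter_not (s := Ico 1 j)
    (p := fun i => lam i + lam j ≤ 2 * k + j - i)
  simp only [Nat.card_Ico, not_le] at h
  rw [fCount, bigPairs]
  omega

theorem fCount_lt {k : ℕ} {lam : ℕ → ℕ} {j : ℕ} (hj : 1 ≤ j) : fCount k lam j < j := by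
  unfold fCount; omega

section KStrict

variable {k m : ℕ} {lam : ℕ → ℕ} (hanti : AntitoneOn lam (Set.Icc 1 m))
  (hstrict : ∀ j, 1 ≤ j → j < m → k < lam j → lam (j + 1) < lam j)
include hanti hstrict

theorem pred_mem_bigPairs {j i : ℕ} (hjm : j ≤ m) (hi : i ∈ bigPairs k lam j) (hi2 : 2 ≤ i) :
    i - 1 ∈ bigPairs k lam j := by
  simp only [bigPairs, mem_filter, mem_Ico] at hi ⊢
  obtain ⟨⟨-, hij⟩, hbig⟩ := hi
  have hji : lam j ≤ lam i := hanti ⟨by omega, by omega⟩ ⟨by omega, hjm⟩ hij.le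
  have hk : k < lam (i - 1) := by
    by_contra! hle
    have : lam i ≤ lam (i - 1) := hanti ⟨by omega, by omega⟩ ⟨by omega, by omega⟩ (by omega)
    omega
  have := hstrict (i - 1) (by omega) (by omega) hk
  rw [Nat.sub_add_cancel (by omega)] at this
  exact ⟨⟨by omega, by omega⟩, by omega⟩

theorem bigPairs_eq_Icc {j : ℕ} (hjm : j ≤ m) : bigPairs k lam j = Icc 1 (fCount k lam j) := by
  rw [fCount_eq_card_bigPairs]
  exact eq_Icc_one_card (fun i hi => (mem_Ico.1 (mem_filter.1 hi).1).1)
    (fun i hi hi2 => pred_mem_bigPairs hanti hstrict hjm hi hi2)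

theorem fCount_add_add_le_sum (hk : 0 < k) {j : ℕ} (hj : 1 ≤ j) (hjm : j ≤ m)
    (hpos : 0 < fCount k lam j + lam j) :
    fCount k lam j + lam j + j ≤ ∑ i ∈ Icc 1 m, lam i + 1 := by
  have hlt := fCount_lt (k := k) (lam := lam) hj
  refine (add_add_le_mul_add_mul_add_one hk hlt (fun hF => ⟨?_, ?_⟩) hpos).trans
    (Nat.add_le_add_right (mul_add_mul_le_sum hanti hlt.le hjm) 1)
  · exact hanti ⟨hF, by omega⟩ ⟨hj, hjm⟩ hlt.le
  · have := (bigPairs_eq_Icc hanti hstrict hjm).symm ▸ mem_Icc.2 ⟨hF, le_rfl⟩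
    simp only [bigPairs, mem_filter] at this
    omega

end KStrict

/-- Let `n > m ≥ 1`, `k = n - m`, and let `λ, μ` be `k`-strict partitions with `m` parts,
all parts at most `n + k`.  If `|λ| + |μ| < 2n`, then for all `1 ≤ j ≤ m`,
`f(λ, m+1-j) + f(μ, j) ≤ n + k - λ_{m+1-j} - μ_j`. -/
theorem stmt_3 (n m k : ℕ) (hm : 1 ≤ m) (hmn : m < n) (hk : k = n - m)
    (lam mu : ℕ → ℕ)
    (hlamtop : lam 1 ≤ n + k) (hmutop : mu 1 ≤ n + k)
    (hlamdec : ∀ i j, 1 ≤ i → i ≤ j → j ≤ m → lam j ≤ lam i)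
    (hmudec : ∀ i j, 1 ≤ i → i ≤ j → j ≤ m → mu j ≤ mu i)
    (hlamstrict : ∀ j, 1 ≤ j → j < m → k < lam j → lam (j + 1) < lam j)
    (hmustrict : ∀ j, 1 ≤ j → j < m → k < mu j → mu (j + 1) < mu j)
    (hsum : (∑ i ∈ Finset.Icc 1 m, lam i) + (∑ i ∈ Finset.Icc 1 m, mu i) < 2 * n) :
    ∀ j, 1 ≤ j → j ≤ m →
      fCount k lam (m + 1 - j) + fCount k mu j + lam (m + 1 - j) + mu j ≤ n + k := by
  intro j hj hjm
  have hk0 : 0 < k := by omega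
  have hlam : AntitoneOn lam (Set.Icc 1 m) := fun a ha b hb hab => hlamdec a b ha.1 hab hb.2
  have hmu : AntitoneOn mu (Set.Icc 1 m) := fun a ha b hb hab => hmudec a b ha.1 hab hb.2
  set J := m + 1 - j
  have hJ : 1 ≤ J := by omega
  have hJm : J ≤ m := by omega
  have hlamJ : lam J ≤ n + k := (hlam ⟨le_rfl, hm⟩ ⟨hJ, hJm⟩ hJ).trans hlamtop
  have hmuj : mu j ≤ n + k := (hmu ⟨le_rfl, hm⟩ ⟨hj, hjm⟩ hj).trans hmutop
  have hFJ := fCount_lt (k := k) (lam := lam) hJ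
  have hGj := fCount_lt (k := k) (lam := mu) hj
  rcases (fCount k lam J + lam J).eq_zero_or_pos with hF | hF
  · have := add_le_of_mul_lt_two_mul hGj (by omega) hmuj
      (by simpa using (mul_add_mul_le_sum hmu (Nat.zero_le j) hjm).trans_lt (by omega))
    omega
  rcases (fCount k mu j + mu j).eq_zero_or_pos with hG | hG
  · have := add_le_of_mul_lt_two_mul hFJ (by omega) hlamJ
      (by simpa using (mul_add_mul_le_sum hlam (Nat.zero_le J) hJm).trans_lt (by omega))
    omega
  have := fCount_add_add_le_sum hlam hlamstrict hk0 hJ hJm hF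
  have := fCount_add_add_le_sum hmu hmustrict hk0 hj hjm hG
  omega
end

section
/- Let n > m ≥ 2 be integers and k = n + 1 - m. Let λ, μ be k-strict partitions with m parts, each part at most n+k, satisfying |λ| + |μ| < 2n + 1. Define g(λ,t,j) ∈ {1,2} by g(λ,t,j)=1 if λ_j > k, or if λ_j = k < λ_{j-1} and n+j+t is even, and g(λ,t,j)=2 otherwise. Then for every j ∈ [1,m] and any types t₁, t₂, one has g(λ, t₁, m+1-j) + g(μ, t₂, j) ≥ 3. -/
/-- The function `g(λ,t,j) ∈ {1,2}` for the even orthogonal Grassmannian `OG(m, 2n+2)`: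
`g = 1` if `λ_j > k`, or if `λ_j = k < λ_{j-1}` and `n + j + t` is even; `g = 2`
otherwise.  (Here `λ₀ = n + k + 1` by convention.) -/
def gFun (n k : ℕ) (lam : ℕ → ℕ) (t j : ℕ) : ℕ :=
  if k < lam j ∨ (lam j = k ∧ k < lam (j - 1) ∧ (n + j + t) % 2 = 0) then 1 else 2

/-- Lower bound: all parts at least `k` on `[1,i]`. -/
lemma aux_sum_basic (k i : ℕ) (ν : ℕ → ℕ)
    (hall : ∀ a ∈ Finset.Icc 1 i, k ≤ ν a) :
    i * k ≤ ∑ a ∈ Finset.Icc 1 i, ν a := by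
  have hc : (Finset.Icc 1 i).card = i := by simp
  calc i * k = (Finset.Icc 1 i).card • k := by rw [hc, smul_eq_mul]
    _ ≤ ∑ a ∈ Finset.Icc 1 i, ν a := Finset.card_nsmul_le_sum _ _ _ hall

/-- Lower bound with one extra: all parts at least `k` on `[1,i]` and the
`(i-1)`-st part at least `k+1`. -/
lemma aux_sum (k i : ℕ) (ν : ℕ → ℕ) (h2 : 2 ≤ i)
    (hall : ∀ a ∈ Finset.Icc 1 i, k ≤ ν a) (hone : k + 1 ≤ ν (i - 1)) :
    i * k + 1 ≤ ∑ a ∈ Finset.Icc 1 i, ν a := by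
  obtain ⟨i', rfl⟩ : ∃ i', i = i' + 2 := ⟨i - 2, by omega⟩
  have hmem : i' + 1 ∈ Finset.Icc 1 (i' + 2) := by simp
  have hone' : k + 1 ≤ ν (i' + 1) := hone
  rw [← Finset.sum_erase_add _ _ hmem]
  have hcard : ((Finset.Icc 1 (i' + 2)).erase (i' + 1)).card = i' + 1 := by
    rw [Finset.card_erase_of_mem hmem, Nat.card_Icc]; omega
  have hrest : (i' + 1) * k ≤ ∑ a ∈ (Finset.Icc 1 (i' + 2)).erase (i' + 1), ν a := by
    calc (i' + 1) * k = ((Finset.Icc 1 (i' + 2)).erase (i' + 1)).card • k := by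
          rw [hcard, smul_eq_mul]
      _ ≤ _ := Finset.card_nsmul_le_sum _ _ _
          (fun a ha => hall a (Finset.mem_of_mem_erase ha))
  have he : (i' + 2) * k = (i' + 1) * k + k := by ring
  omega

/-- Let `n > m ≥ 2`, `k = n + 1 - m`, and let `λ, μ` be `k`-strict partitions with `m`
parts, each part at most `n + k`, with `|λ| + |μ| < 2n + 1`.  Then for every
`1 ≤ j ≤ m` and any types `t₁, t₂`, one has `g(λ, t₁, m+1-j) + g(μ, t₂, j) ≥ 3`. -/
theorem stmt_4 (n m k : ℕ) (hm : 2 ≤ m) (hmn : m < n) (hk : k = n + 1 - m)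
    (lam mu : ℕ → ℕ)
    (hlam0 : lam 0 = n + k + 1) (hmu0 : mu 0 = n + k + 1)
    (hlamtop : lam 1 ≤ n + k) (hmutop : mu 1 ≤ n + k)
    (hlamdec : ∀ i j, 1 ≤ i → i ≤ j → j ≤ m → lam j ≤ lam i)
    (hmudec : ∀ i j, 1 ≤ i → i ≤ j → j ≤ m → mu j ≤ mu i)
    (hlamstrict : ∀ j, 1 ≤ j → j < m → k < lam j → lam (j + 1) < lam j)
    (hmustrict : ∀ j, 1 ≤ j → j < m → k < mu j → mu (j + 1) < mu j)
    (hsum : (∑ i ∈ Finset.Icc 1 m, lam i) + (∑ i ∈ Finset.Icc 1 m, mu i) < 2 * n + 1) :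
    ∀ j, 1 ≤ j → j ≤ m → ∀ t₁ t₂ : ℕ,
      3 ≤ gFun n k lam t₁ (m + 1 - j) + gFun n k mu t₂ j := by
  intro j hj1 hjm t₁ t₂
  set i := m + 1 - j with hidef
  have hi1 : 1 ≤ i := by omega
  have hiM : i ≤ m := by omega
  have hij : i + j = m + 1 := by omega
  unfold gFun
  by_cases c1 : k < lam i ∨ (lam i = k ∧ k < lam (i - 1) ∧ (n + i + t₁) % 2 = 0)
  · by_cases c2 : k < mu j ∨ (mu j = k ∧ k < mu (j - 1) ∧ (n + j + t₂) % 2 = 0)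
    · exfalso
      have hk2 : 2 ≤ k := by omega
      have hlami : k ≤ lam i := by rcases c1 with h | h <;> omega
      have hmuj : k ≤ mu j := by rcases c2 with h | h <;> omega
      have hlamall : ∀ a ∈ Finset.Icc 1 i, k ≤ lam a := by
        intro a ha
        rw [Finset.mem_Icc] at ha
        exact le_trans hlami (hlamdec a i ha.1 ha.2 hiM)
      have hmuall : ∀ a ∈ Finset.Icc 1 j, k ≤ mu a := by
        intro a ha
        rw [Finset.mem_Icc] at ha
        exact le_trans hmuj (hmudec a j ha.1 ha.2 hjm)
      -- one extra on the side whose index is ≥ 2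
      have hkey : i * k + j * k + 1 ≤
          (∑ a ∈ Finset.Icc 1 i, lam a) + (∑ a ∈ Finset.Icc 1 j, mu a) := by
        rcases le_or_gt 2 i with h2 | h2
        · have hone : k + 1 ≤ lam (i - 1) := by
            rcases c1 with h | h
            · have := hlamdec (i - 1) i (by omega) (by omega) hiM
              omega
            · omega
          have := aux_sum k i lam h2 hlamall hone
          have := aux_sum_basic k j mu hmuall
          omega
        · have h2j : 2 ≤ j := by omega
          have hone : k + 1 ≤ mu (j - 1) := by
            rcases c2 with h | h
            · have := hmudec (j - 1) j (by omega) (by omega) hjm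
              omega
            · omega
          have := aux_sum k j mu h2j hmuall hone
          have := aux_sum_basic k i lam hlamall
          omega
      have hsublam : (∑ a ∈ Finset.Icc 1 i, lam a) ≤ ∑ a ∈ Finset.Icc 1 m, lam a :=
        Finset.sum_le_sum_of_subset (Finset.Icc_subset_Icc_right hiM)
      have hsubmu : (∑ a ∈ Finset.Icc 1 j, mu a) ≤ ∑ a ∈ Finset.Icc 1 m, mu a :=
        Finset.sum_le_sum_of_subset (Finset.Icc_subset_Icc_right hjm)
      -- arithmetic: (m+1)*k ≥ 2n
      obtain ⟨m', rfl⟩ : ∃ m', m = m' + 2 := ⟨m - 2, by omega⟩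
      obtain ⟨k', hk'⟩ : ∃ k', k = k' + 2 := ⟨k - 2, by omega⟩
      subst hk'
      have hij3 : i + j = m' + 3 := by omega
      have hik : i * (k' + 2) + j * (k' + 2) = m' * k' + 2 * m' + 3 * k' + 6 := by
        rw [← Nat.add_mul, hij3]; ring
      have hn : n = k' + m' + 3 := by omega
      have hpos : 0 ≤ m' * k' := Nat.zero_le _
      omega
    · rw [if_pos c1, if_neg c2]
  · rw [if_neg c1]
    split <;> omega
end

section
/- In the symmetric group S_{n+1} (Weyl group of type A_n), identify the minimal length representatives W^{P_m} with partitions inside an m × (n+1-m) rectangle via w ↦ (w(m)-m, …, w(1)-1). Then for u, w ∈ W^{P_m}, u ≤ w in Bruhat order if and only if the corresponding partitions satisfy λ(u)ᵢ ≤ λ(w)ᵢ for all 1 ≤ i ≤ m (containment of Young diagrams). -/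
/-- The simple transposition `s_i = (i, i+1)` in `S_{n+1}`. -/
def simpleTransposition (n : ℕ) (i : Fin n) : Equiv.Perm (Fin (n + 1)) :=
  Equiv.swap i.castSucc i.succ

/-- The product of the word of simple transpositions `s_{i₁} ⋯ s_{i_ℓ}`. -/
def permWordProd (n : ℕ) (l : List (Fin n)) : Equiv.Perm (Fin (n + 1)) :=
  (l.map (simpleTransposition n)).prod

/-- The Coxeter length of a permutation: the minimal length of a word of simple
transpositions expressing it. -/
noncomputable def permLength (n : ℕ) (σ : Equiv.Perm (Fin (n + 1))) : ℕ :=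
  sInf {c | ∃ l : List (Fin n), l.length = c ∧ permWordProd n l = σ}

/-- Bruhat order on `S_{n+1}`: `u ≤ w` iff some reduced word for `w` contains a reduced
subword expressing `u`. -/
def BruhatLE (n : ℕ) (u w : Equiv.Perm (Fin (n + 1))) : Prop :=
  ∃ l : List (Fin n), l.length = permLength n w ∧ permWordProd n l = w ∧
    ∃ l' : List (Fin n), l'.Sublist l ∧ l'.length = permLength n u ∧ permWordProd n l' = u

/-!
The length of a permutation is its number of inversions, so in a reduced word every letter,
read from the right, creates a new inversion. Along such a word, deleting letters can only lower
the prefix maxima of the permutation, and for a Grassmannian `w` the prefix maxima over the first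
`m` positions are the values `w j` themselves: this gives `u j ≤ w j` when `u ≤ w`.
Conversely, removing a corner box from the partition of a Grassmannian `w` is a left
multiplication by a simple transposition that lowers the length by one. Iterating this yields a
reduced word for `w` out of which a reduced word for every Grassmannian `u` with a smaller
partition is extracted as a subword.
-/

open Equiv Finset

variable {n : ℕ}

lemma permWordProd_nil : permWordProd n [] = 1 := rfl

lemma permWordProd_cons (i : Fin n) (l : List (Fin n)) :
    permWordProd n (i :: l) = simpleTransposition n i * permWordProd n l := by
  simp [permWordProd]

lemma simpleTransposition_mul_cancel_left (i : Fin n) (σ : Perm (Fin (n + 1))) :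
    simpleTransposition n i * (simpleTransposition n i * σ) = σ := by
  simp [simpleTransposition, ← mul_assoc]

lemma simpleTransposition_apply_lt_apply_iff (i : Fin n) (x y : Fin (n + 1)) :
    simpleTransposition n i x < simpleTransposition n i y ↔
      (x < y ∧ ¬(x = i.castSucc ∧ y = i.succ)) ∨ (x = i.succ ∧ y = i.castSucc) := by
  simp only [simpleTransposition, swap_apply_def]
  split_ifs <;> simp only [Fin.lt_def, Fin.ext_iff, Fin.val_castSucc, Fin.val_succ] at * <;> omega

def inversions (σ : Perm (Fin (n + 1))) : Finset (Fin (n + 1) × Fin (n + 1)) :=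
  {p | p.1 < p.2 ∧ σ p.2 < σ p.1}

def inversionCount (σ : Perm (Fin (n + 1))) : ℕ := #(inversions σ)

lemma inversionCount_one : inversionCount (1 : Perm (Fin (n + 1))) = 0 := by
  rw [inversionCount, card_eq_zero, inversions, filter_eq_empty_iff]
  exact fun p _ h => lt_asymm h.1 h.2

lemma inversions_simpleTransposition_mul {σ : Perm (Fin (n + 1))} {i : Fin n}
    (h : σ⁻¹ i.castSucc < σ⁻¹ i.succ) :
    inversions (simpleTransposition n i * σ) =
      insert (σ⁻¹ i.castSucc, σ⁻¹ i.succ) (inversions σ) := by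
  ext ⟨a, b⟩
  simp only [inversions, mem_filter, mem_univ, true_and, mem_insert, Prod.mk.injEq,
    Perm.mul_apply, simpleTransposition_apply_lt_apply_iff]
  constructor
  · rintro ⟨hab, (⟨hlt, -⟩ | ⟨hb, ha⟩)⟩
    · exact Or.inr ⟨hab, hlt⟩
    · exact Or.inl ⟨Perm.eq_inv_iff_eq.2 ha, Perm.eq_inv_iff_eq.2 hb⟩
  · rintro (⟨rfl, rfl⟩ | ⟨hab, hlt⟩)
    · simp only [Perm.coe_inv, apply_symm_apply] at h ⊢
      exact ⟨h, by simp⟩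
    · refine ⟨hab, Or.inl ⟨hlt, ?_⟩⟩
      rintro ⟨hb, ha⟩
      rw [← hb, ← ha, Perm.coe_inv, symm_apply_apply, symm_apply_apply] at h
      exact lt_asymm hab h

lemma inversionCount_simpleTransposition_mul_of_lt {σ : Perm (Fin (n + 1))} {i : Fin n}
    (h : σ⁻¹ i.castSucc < σ⁻¹ i.succ) :
    inversionCount (simpleTransposition n i * σ) = inversionCount σ + 1 := by
  rw [inversionCount, inversions_simpleTransposition_mul h, card_insert_of_notMem, inversionCount]
  simp [inversions, Fin.castSucc_lt_succ.le]

lemma inversionCount_simpleTransposition_mul_of_gt {σ : Perm (Fin (n + 1))} {i : Fin n}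
    (h : σ⁻¹ i.succ < σ⁻¹ i.castSucc) :
    inversionCount (simpleTransposition n i * σ) + 1 = inversionCount σ := by
  have h' : (simpleTransposition n i * σ)⁻¹ i.castSucc <
      (simpleTransposition n i * σ)⁻¹ i.succ := by
    simpa [simpleTransposition] using h
  simpa [simpleTransposition_mul_cancel_left] using
    (inversionCount_simpleTransposition_mul_of_lt h').symm

lemma inv_apply_castSucc_lt_or_gt (σ : Perm (Fin (n + 1))) (i : Fin n) :
    σ⁻¹ i.castSucc < σ⁻¹ i.succ ∨ σ⁻¹ i.succ < σ⁻¹ i.castSucc :=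
  lt_or_gt_of_ne ((σ⁻¹).injective.ne Fin.castSucc_lt_succ.ne)

lemma exists_inv_apply_succ_lt_of_ne_one {σ : Perm (Fin (n + 1))} (h : σ ≠ 1) :
    ∃ i : Fin n, σ⁻¹ i.succ < σ⁻¹ i.castSucc := by
  by_contra! hasc
  have hmono : StrictMono ⇑σ⁻¹ := Fin.strictMono_iff_lt_succ.2 fun i =>
    (inv_apply_castSucc_lt_or_gt σ i).resolve_right (hasc i).not_gt
  exact h (inv_eq_one.1 (Perm.ext fun x => hmono.apply_eq))

lemma inversionCount_permWordProd_le (l : List (Fin n)) :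
    inversionCount (permWordProd n l) ≤ l.length := by
  induction l with
  | nil => simp [permWordProd_nil, inversionCount_one]
  | cons i l ih =>
    rw [permWordProd_cons, List.length_cons]
    rcases inv_apply_castSucc_lt_or_gt (permWordProd n l) i with h | h
    · rw [inversionCount_simpleTransposition_mul_of_lt h]; omega
    · have := inversionCount_simpleTransposition_mul_of_gt h; omega

lemma exists_permWordProd_eq_length_eq_inversionCount (σ : Perm (Fin (n + 1))) :
    ∃ l : List (Fin n), permWordProd n l = σ ∧ l.length = inversionCount σ := by
  induction hk : inversionCount σ using Nat.strong_induction_on generalizing σ with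
  | _ k ih =>
    by_cases hσ : σ = 1
    · subst hσ
      exact ⟨[], permWordProd_nil, by rw [← hk, inversionCount_one]; rfl⟩
    obtain ⟨i, hi⟩ := exists_inv_apply_succ_lt_of_ne_one hσ
    have hdrop := inversionCount_simpleTransposition_mul_of_gt hi
    obtain ⟨l, hl, hlen⟩ := ih _ (by omega) (simpleTransposition n i * σ) rfl
    refine ⟨i :: l, ?_, ?_⟩
    · rw [permWordProd_cons, hl, simpleTransposition_mul_cancel_left]
    · rw [List.length_cons, hlen]; omega

theorem permLength_eq_inversionCount (σ : Perm (Fin (n + 1))) :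
    permLength n σ = inversionCount σ := by
  obtain ⟨l, hl, hlen⟩ := exists_permWordProd_eq_length_eq_inversionCount σ
  refine le_antisymm (Nat.sInf_le ⟨l, hlen, hl⟩) (le_csInf ⟨_, l, hlen, hl⟩ ?_)
  rintro c ⟨l', rfl, rfl⟩
  exact inversionCount_permWordProd_le l'

/-- Every prefix maximum of `τ` is at most the corresponding prefix maximum of `σ`. -/
def PrefixDominated (τ σ : Perm (Fin (n + 1))) : Prop :=
  ∀ a, ∃ b ≤ a, τ a ≤ σ b

namespace PrefixDominated

lemma refl (σ : Perm (Fin (n + 1))) : PrefixDominated σ σ :=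
  fun a => ⟨a, le_rfl, le_rfl⟩

lemma trans {ρ σ τ : Perm (Fin (n + 1))} (h₁ : PrefixDominated ρ σ)
    (h₂ : PrefixDominated σ τ) : PrefixDominated ρ τ := by
  intro a
  obtain ⟨b, hba, hb⟩ := h₁ a
  obtain ⟨c, hcb, hc⟩ := h₂ b
  exact ⟨c, hcb.trans hba, hb.trans hc⟩

lemma simpleTransposition_mul {τ σ : Perm (Fin (n + 1))} {i : Fin n}
    (hσ : σ⁻¹ i.castSucc < σ⁻¹ i.succ) (h : PrefixDominated τ σ) :
    PrefixDominated (simpleTransposition n i * τ) (simpleTransposition n i * σ) := by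
  intro a
  obtain ⟨b, hba, hb⟩ := h a
  by_cases hpair : τ a = i.castSucc ∧ σ b = i.succ
  · refine ⟨σ⁻¹ i.castSucc, ?_, by simp [hpair.1]⟩
    calc σ⁻¹ i.castSucc ≤ σ⁻¹ i.succ := hσ.le
      _ = b := by simp [← hpair.2]
      _ ≤ a := hba
  · refine ⟨b, hba, ?_⟩
    rcases hb.eq_or_lt with heq | hlt
    · rw [Perm.mul_apply, Perm.mul_apply, heq]
    · exact ((simpleTransposition_apply_lt_apply_iff i _ _).2 (Or.inl ⟨hlt, hpair⟩)).le

lemma apply_le_of_strictMonoOn {τ σ : Perm (Fin (n + 1))} {m : ℕ} (h : PrefixDominated τ σ)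
    (hσ : StrictMonoOn σ {x | (x : ℕ) < m}) {j : Fin (n + 1)} (hj : (j : ℕ) < m) :
    τ j ≤ σ j := by
  obtain ⟨b, hbj, hb⟩ := h j
  exact hb.trans (hσ.monotoneOn (lt_of_le_of_lt (Fin.le_def.1 hbj) hj) hj hbj)

end PrefixDominated

lemma prefixDominated_simpleTransposition_mul {σ : Perm (Fin (n + 1))} {i : Fin n}
    (hσ : σ⁻¹ i.castSucc < σ⁻¹ i.succ) :
    PrefixDominated σ (simpleTransposition n i * σ) := by
  intro a
  by_cases ha : σ a = i.succ
  · refine ⟨σ⁻¹ i.castSucc, hσ.le.trans (by simp [← ha]), ?_⟩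
    simp [ha, simpleTransposition]
  · refine ⟨a, le_rfl, ?_⟩
    by_cases ha' : σ a = i.castSucc
    · simp [ha', simpleTransposition, Fin.castSucc_lt_succ.le]
    · simp [simpleTransposition, swap_apply_of_ne_of_ne ha' ha]

lemma prefixDominated_of_sublist {l l' : List (Fin n)}
    (hl : inversionCount (permWordProd n l) = l.length) (h : l'.Sublist l) :
    PrefixDominated (permWordProd n l') (permWordProd n l) := by
  induction l generalizing l' with
  | nil => rw [List.sublist_nil.1 h]; exact .refl _
  | cons i l ih =>
    rw [permWordProd_cons, List.length_cons] at hl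
    set σ := permWordProd n l
    have hle : inversionCount σ ≤ l.length := inversionCount_permWordProd_le l
    have hasc : σ⁻¹ i.castSucc < σ⁻¹ i.succ :=
      (inv_apply_castSucc_lt_or_gt σ i).resolve_right fun hgt => by
        have := inversionCount_simpleTransposition_mul_of_gt hgt; omega
    have hred : inversionCount σ = l.length := by
      rw [inversionCount_simpleTransposition_mul_of_lt hasc] at hl; omega
    rw [permWordProd_cons]
    rcases List.sublist_cons_iff.1 h with h | ⟨r, rfl, hr⟩
    · exact (ih hred h).trans (prefixDominated_simpleTransposition_mul hasc)
    · rw [permWordProd_cons]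
      exact (ih hred hr).simpleTransposition_mul hasc

structure IsGrassmannian (m : ℕ) (σ : Perm (Fin (n + 1))) : Prop where
  strictMonoOn_lt : StrictMonoOn σ {x | (x : ℕ) < m}
  strictMonoOn_ge : StrictMonoOn σ {x | m ≤ (x : ℕ)}

namespace IsGrassmannian

variable {m : ℕ} {σ : Perm (Fin (n + 1))}

lemma le_apply (hσ : IsGrassmannian m σ) {j : Fin (n + 1)} (hj : (j : ℕ) < m) : j ≤ σ j := by
  induction j using Fin.induction with
  | zero => exact Fin.zero_le _
  | succ j ih =>
    have hj' : (j.castSucc : ℕ) < m := by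
      simp only [Fin.val_castSucc, Fin.val_succ] at hj ⊢; omega
    have hstep := hσ.strictMonoOn_lt hj' hj Fin.castSucc_lt_succ
    have := ih hj'
    rw [Fin.le_def, Fin.val_castSucc] at this
    rw [Fin.lt_def] at hstep
    rw [Fin.le_def, Fin.val_succ]
    omega

lemma eq_one (hσ : IsGrassmannian m σ) (h : ∀ j : Fin (n + 1), (j : ℕ) < m → σ j ≤ j) :
    σ = 1 := by
  have hfix : ∀ j : Fin (n + 1), (j : ℕ) < m → σ j = j :=
    fun j hj => le_antisymm (h j hj) (hσ.le_apply hj)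
  have hmono : StrictMono σ := by
    intro a b hab
    by_cases hb : (b : ℕ) < m
    · exact hσ.strictMonoOn_lt (lt_trans (Fin.lt_def.1 hab) hb) hb hab
    by_cases ha : (a : ℕ) < m
    · rw [hfix a ha]
      by_contra! hba
      have hσb : σ b = b := σ.injective (hfix (σ b) (lt_of_le_of_lt (Fin.le_def.1 hba) ha))
      exact absurd (hσb ▸ hba) (not_le.2 hab)
    · exact hσ.strictMonoOn_ge (not_lt.1 ha) (not_lt.1 hb) hab
  exact Perm.ext fun x => hmono.apply_eq

lemma simpleTransposition_mul (hσ : IsGrassmannian m σ) {i : Fin n}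
    (hsucc : (σ⁻¹ i.succ : ℕ) < m) (hcast : m ≤ (σ⁻¹ i.castSucc : ℕ)) :
    IsGrassmannian m (simpleTransposition n i * σ) := by
  have hpair : ∀ a b, a < b → ¬(σ a = i.castSucc ∧ σ b = i.succ) := by
    rintro a b hab ⟨ha, hb⟩
    rw [← Perm.eq_inv_iff_eq] at ha hb
    subst ha hb
    rw [Fin.lt_def] at hab
    omega
  constructor
  · intro a ha b hb hab
    exact (simpleTransposition_apply_lt_apply_iff i _ _).2
      (Or.inl ⟨hσ.strictMonoOn_lt ha hb hab, hpair a b hab⟩)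
  · intro a ha b hb hab
    exact (simpleTransposition_apply_lt_apply_iff i _ _).2
      (Or.inl ⟨hσ.strictMonoOn_ge ha hb hab, hpair a b hab⟩)

lemma exists_corner (hσ : IsGrassmannian m σ) (hne : σ ≠ 1) :
    ∃ (k : Fin (n + 1)) (i : Fin n), (k : ℕ) < m ∧ σ k = i.succ ∧ k ≤ i.castSucc ∧
      ∀ j < k, σ j = j := by
  obtain ⟨k, ⟨hkm, hk⟩, hmin⟩ := WellFounded.has_min wellFounded_lt
    {j : Fin (n + 1) | (j : ℕ) < m ∧ j < σ j} (by
      by_contra hempty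
      refine hne (hσ.eq_one fun j hj => not_lt.1 fun hlt => hempty ⟨j, hj, hlt⟩))
  obtain ⟨i, hi⟩ := Fin.exists_succ_eq.2 (Fin.ne_zero_of_lt hk)
  refine ⟨k, i, hkm, hi.symm, Fin.le_castSucc_iff.2 (hi ▸ hk), fun j hjk => ?_⟩
  have hjm : (j : ℕ) < m := lt_trans (Fin.lt_def.1 hjk) hkm
  exact le_antisymm (not_lt.1 fun hlt => hmin j ⟨hjm, hlt⟩ hjk) (hσ.le_apply hjm)

lemma le_inv_apply_castSucc (hσ : IsGrassmannian m σ) {k : Fin (n + 1)} {i : Fin n}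
    (hkm : (k : ℕ) < m) (hk : σ k = i.succ) (hki : k ≤ i.castSucc)
    (hlow : ∀ j < k, σ j ≤ j) : m ≤ (σ⁻¹ i.castSucc : ℕ) := by
  by_contra! hq
  set q := σ⁻¹ i.castSucc
  have hσq : σ q = i.castSucc := by simp [q]
  have hqk : q < k := (hσ.strictMonoOn_lt.lt_iff_lt hq hkm).1 (by
    rw [hσq, hk]; exact Fin.castSucc_lt_succ)
  have := hlow q hqk
  rw [hσq] at this
  exact absurd (hki.trans this) (not_le.2 hqk)

end IsGrassmannian

lemma simpleTransposition_mul_apply_of_ne {σ : Perm (Fin (n + 1))} {i : Fin n}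
    {j k : Fin (n + 1)} (hk : σ k = i.succ) (hjk : j ≠ k) (hj : j ≠ σ⁻¹ i.castSucc) :
    (simpleTransposition n i * σ) j = σ j := by
  refine swap_apply_of_ne_of_ne (fun h => hj ?_) (fun h => hjk (σ.injective (h.trans hk.symm)))
  simp [← h]

lemma simpleTransposition_mul_apply_of_eq_succ {σ : Perm (Fin (n + 1))} {i : Fin n}
    {k : Fin (n + 1)} (hk : σ k = i.succ) :
    (simpleTransposition n i * σ) k = i.castSucc := by
  simp [simpleTransposition, hk]

section FirstRows

variable {m : ℕ} {τ σ : Perm (Fin (n + 1))} {i : Fin n} {k : Fin (n + 1)}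

lemma simpleTransposition_mul_apply_of_lt (hk : σ k = i.succ)
    (hσ : m ≤ (σ⁻¹ i.castSucc : ℕ)) {j : Fin (n + 1)} (hj : (j : ℕ) < m) (hjk : j ≠ k) :
    (simpleTransposition n i * σ) j = σ j :=
  simpleTransposition_mul_apply_of_ne hk hjk (Fin.ne_of_lt (Fin.lt_def.2 (by omega)))

lemma apply_le_simpleTransposition_mul_apply (hk : σ k = i.succ)
    (hσ : m ≤ (σ⁻¹ i.castSucc : ℕ)) (hle : ∀ j : Fin (n + 1), (j : ℕ) < m → τ j ≤ σ j)
    (hτk : τ k < σ k) :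
    ∀ j : Fin (n + 1), (j : ℕ) < m → τ j ≤ (simpleTransposition n i * σ) j := by
  intro j hj
  by_cases hjk : j = k
  · subst hjk
    rw [simpleTransposition_mul_apply_of_eq_succ hk, Fin.le_castSucc_iff, ← hk]
    exact hτk
  · exact (hle j hj).trans (simpleTransposition_mul_apply_of_lt hk hσ hj hjk).ge

lemma simpleTransposition_mul_apply_le_apply (hσk : σ k = i.succ) (hτk : τ k = i.succ)
    (hσ : m ≤ (σ⁻¹ i.castSucc : ℕ)) (hτ : m ≤ (τ⁻¹ i.castSucc : ℕ))
    (hle : ∀ j : Fin (n + 1), (j : ℕ) < m → τ j ≤ σ j) :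
    ∀ j : Fin (n + 1), (j : ℕ) < m →
      (simpleTransposition n i * τ) j ≤ (simpleTransposition n i * σ) j := by
  intro j hj
  by_cases hjk : j = k
  · subst hjk
    rw [simpleTransposition_mul_apply_of_eq_succ hσk, simpleTransposition_mul_apply_of_eq_succ hτk]
  · rw [simpleTransposition_mul_apply_of_lt hσk hσ hj hjk,
      simpleTransposition_mul_apply_of_lt hτk hτ hj hjk]
    exact hle j hj

end FirstRows

namespace IsGrassmannian

variable {m : ℕ}

theorem exists_reduced_word_sublist {w : Perm (Fin (n + 1))} (hw : IsGrassmannian m w) :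
    ∃ l : List (Fin n), permWordProd n l = w ∧ l.length = inversionCount w ∧
      ∀ u, IsGrassmannian m u → (∀ j : Fin (n + 1), (j : ℕ) < m → u j ≤ w j) →
        ∃ l' : List (Fin n), l'.Sublist l ∧ permWordProd n l' = u ∧
          l'.length = inversionCount u := by
  induction hN : inversionCount w using Nat.strong_induction_on generalizing w with
  | _ N ih =>
  by_cases hw1 : w = 1
  · subst hw1
    refine ⟨[], rfl, by rw [← hN, inversionCount_one]; rfl, fun u hu hle => ?_⟩
    obtain rfl : u = 1 := hu.eq_one hle
    exact ⟨[], List.nil_sublist _, rfl, by rw [inversionCount_one]; rfl⟩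
  obtain ⟨k, i, hkm, hwk, hki, hlow⟩ := hw.exists_corner hw1
  have hwk' : w⁻¹ i.succ = k := by simp [← hwk]
  have hwi := hw.le_inv_apply_castSucc hkm hwk hki fun j hj => (hlow j hj).le
  have hdrop := inversionCount_simpleTransposition_mul_of_gt
    (show w⁻¹ i.succ < w⁻¹ i.castSucc from Fin.lt_def.2 (by rw [hwk']; omega))
  obtain ⟨l, hl, hlen, hsub⟩ :=
    ih _ (by omega) (hw.simpleTransposition_mul (by rwa [hwk']) hwi) rfl
  refine ⟨i :: l, by rw [permWordProd_cons, hl, simpleTransposition_mul_cancel_left],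
    by rw [List.length_cons, hlen]; omega, fun u hu hle => ?_⟩
  rcases (hle k hkm).lt_or_eq with huk | huk
  · obtain ⟨l', hl'⟩ := hsub u hu (apply_le_simpleTransposition_mul_apply hwk hwi hle huk)
    exact ⟨l', hl'.1.cons i, hl'.2⟩
  · rw [hwk] at huk
    have hui := hu.le_inv_apply_castSucc hkm huk hki fun j hj =>
      (hle j (lt_trans (Fin.lt_def.1 hj) hkm)).trans (hlow j hj).le
    have huk' : u⁻¹ i.succ = k := by simp [← huk]
    have hudrop := inversionCount_simpleTransposition_mul_of_gt
      (show u⁻¹ i.succ < u⁻¹ i.castSucc from Fin.lt_def.2 (by rw [huk']; omega))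
    obtain ⟨l', hsub', hl', hlen'⟩ := hsub _ (hu.simpleTransposition_mul (by rwa [huk']) hui)
      (simpleTransposition_mul_apply_le_apply hwk huk hwi hui hle)
    exact ⟨i :: l', hsub'.cons_cons i, by rw [permWordProd_cons, hl',
      simpleTransposition_mul_cancel_left], by rw [List.length_cons, hlen']; omega⟩

end IsGrassmannian

theorem stmt_14_general (n m : ℕ)
    (u w : Equiv.Perm (Fin (n + 1)))
    (hu1 : ∀ i j : Fin (n + 1), i < j → (j : ℕ) < m → u i < u j)
    (hu2 : ∀ i j : Fin (n + 1), i < j → m ≤ (i : ℕ) → u i < u j)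
    (hw1 : ∀ i j : Fin (n + 1), i < j → (j : ℕ) < m → w i < w j)
    (hw2 : ∀ i j : Fin (n + 1), i < j → m ≤ (i : ℕ) → w i < w j) :
    BruhatLE n u w ↔
      ∀ j : Fin (n + 1), (j : ℕ) < m → (u j : ℕ) - (j : ℕ) ≤ (w j : ℕ) - (j : ℕ) := by
  have hu : IsGrassmannian m u :=
    ⟨fun a _ b hb hab => hu1 a b hab hb, fun a ha b _ hab => hu2 a b hab ha⟩
  have hw : IsGrassmannian m w :=
    ⟨fun a _ b hb hab => hw1 a b hab hb, fun a ha b _ hab => hw2 a b hab ha⟩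
  constructor
  · rintro ⟨l, hlen, rfl, l', hsub, -, rfl⟩ j hj
    rw [permLength_eq_inversionCount] at hlen
    exact Nat.sub_le_sub_right
      ((prefixDominated_of_sublist hlen.symm hsub).apply_le_of_strictMonoOn
        hw.strictMonoOn_lt hj) _
  · intro hpart
    obtain ⟨l, hl, hlen, hsub⟩ := hw.exists_reduced_word_sublist
    obtain ⟨l', hl'sub, hl', hlen'⟩ := hsub u hu fun j hj => by
      have hju := Fin.le_def.1 (hu.le_apply hj)
      have hjw := Fin.le_def.1 (hw.le_apply hj)
      have hrow := hpart j hj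
      rw [Fin.le_def]
      omega
    exact ⟨l, by rw [hlen, permLength_eq_inversionCount], hl, l', hl'sub,
      by rw [hlen', permLength_eq_inversionCount], hl'⟩

/-- In `S_{n+1}` (type `A_n`), identify Grassmannian permutations `W^{P_m}` (those
increasing on the first `m` positions and on the last `n+1-m` positions) with partitions
in an `m × (n+1-m)` rectangle via `w ↦ (w(m)-m, …, w(1)-1)`.  Then for `u, w ∈ W^{P_m}`,
`u ≤ w` in Bruhat order iff the corresponding partitions satisfy `λ(u)ᵢ ≤ λ(w)ᵢ` for all
`i`, i.e. (in 0-indexed form) `u(j) - j ≤ w(j) - j` for every position `j < m`. -/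
theorem stmt_14 (n m : ℕ) (hm : 1 ≤ m) (hmn : m ≤ n)
    (u w : Equiv.Perm (Fin (n + 1)))
    (hu1 : ∀ i j : Fin (n + 1), i < j → (j : ℕ) < m → u i < u j)
    (hu2 : ∀ i j : Fin (n + 1), i < j → m ≤ (i : ℕ) → u i < u j)
    (hw1 : ∀ i j : Fin (n + 1), i < j → (j : ℕ) < m → w i < w j)
    (hw2 : ∀ i j : Fin (n + 1), i < j → m ≤ (i : ℕ) → w i < w j) :
    BruhatLE n u w ↔
      ∀ j : Fin (n + 1), (j : ℕ) < m → (u j : ℕ) - (j : ℕ) ≤ (w j : ℕ) - (j : ℕ) :=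
  stmt_14_general n m u w hu1 hu2 hw1 hw2
end

section
/- Let n ≥ 2 and consider the odd orthogonal Grassmannian OG(m, 2n+1) with 1 ≤ m ≤ n, k = n - m. Define the index set map p_j(λ) = n+k+1 - λ_j + #{i<j : λ_i + λ_j ≤ 2k + j - i} + [λ_j ≤ k] for a k-strict partition λ in the m×(n+k) rectangle. Then λ ↦ (p₁(λ) < ⋯ < p_m(λ)) is injective into the set of subsequences P ⊆ [1, 2n+1] with p_i + p_j ≠ 2n+2 for all i ≠ j and n+1 ∉ P. -/
/-- The index-set (Schubert symbol) map for the odd orthogonal Grassmannian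
`OG(m, 2n+1)` with `k = n - m`:
`p_j(λ) = n+k+1 - λ_j + #{i < j : λ_i + λ_j ≤ 2k + j - i} + [λ_j ≤ k]`. -/
def pIdx (n k : ℕ) (lam : ℕ → ℕ) (j : ℕ) : ℕ :=
  n + k + 1 - lam j + ((Finset.Ico 1 j).filter fun i => lam i + lam j ≤ 2 * k + j - i).card
    + (if lam j ≤ k then 1 else 0)

/-- A `k`-strict partition inside the `m × (n+k)` rectangle (indexed by `1, …, m`). -/
def IsKStrictRect (n k m : ℕ) (lam : ℕ → ℕ) : Prop :=
  lam 1 ≤ n + k ∧ (∀ i j, 1 ≤ i → i ≤ j → j ≤ m → lam j ≤ lam i) ∧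
    (∀ j, 1 ≤ j → j < m → k < lam j → lam (j + 1) < lam j)

namespace StmtAux

variable {n k m : ℕ} {lam mu : ℕ → ℕ}

lemma lam_le (h : IsKStrictRect n k m lam) {j : ℕ} (hj1 : 1 ≤ j) (hjm : j ≤ m) :
    lam j ≤ n + k :=
  le_trans (h.2.1 1 j le_rfl hj1 hjm) h.1

/-- Strictness chain: if `lam (i+d) > k` then `lam i ≥ lam (i+d) + d`. -/
lemma strict_chain (h : IsKStrictRect n k m lam) :
    ∀ d i, 1 ≤ i → i + d ≤ m → k < lam (i + d) → lam (i + d) + d ≤ lam i := by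
  intro d
  induction d with
  | zero => intro i _ _ _; simp
  | succ d ih =>
    intro i hi him hkd
    have h1 : lam (i + d + 1) ≤ lam (i + d) :=
      h.2.1 (i + d) (i + d + 1) (by omega) (by omega) (by omega)
    have hkd' : k < lam (i + d) := lt_of_lt_of_le hkd h1
    have h2 : lam (i + d + 1) < lam (i + d) := h.2.2 (i + d) (by omega) (by omega) hkd'
    have h3 := ih i hi (by omega) hkd'
    have : i + (d + 1) = i + d + 1 := by omega
    rw [this]
    omega

lemma strict_ge (h : IsKStrictRect n k m lam) {i j : ℕ} (hi : 1 ≤ i) (hij : i ≤ j)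
    (hjm : j ≤ m) (hkj : k < lam j) : lam j + (j - i) ≤ lam i := by
  have := strict_chain h (j - i) i hi (by omega) (by rwa [show i + (j - i) = j by omega])
  rwa [show i + (j - i) = j by omega] at this

/-- If `lam j > k`, every `i < j` is "uncounted". -/
lemma filter_empty (h : IsKStrictRect n k m lam) {j : ℕ} (hj1 : 1 ≤ j) (hjm : j ≤ m)
    (hkj : k < lam j) :
    ((Finset.Ico 1 j).filter fun i => lam i + lam j ≤ 2 * k + j - i) = ∅ := by
  rw [Finset.filter_eq_empty_iff]
  intro i hi
  rw [Finset.mem_Ico] at hi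
  have h1 : lam j + (j - i) ≤ lam i := strict_ge h hi.1 (le_of_lt hi.2) hjm hkj
  omega

lemma pIdx_high (h : IsKStrictRect n k m lam) {j : ℕ} (hj1 : 1 ≤ j) (hjm : j ≤ m)
    (hkj : k < lam j) : pIdx n k lam j = n + k + 1 - lam j := by
  rw [pIdx, filter_empty h hj1 hjm hkj, if_neg (by omega)]
  simp

lemma pIdx_le_n (h : IsKStrictRect n k m lam) {j : ℕ} (hj1 : 1 ≤ j) (hjm : j ≤ m)
    (hkj : k < lam j) : pIdx n k lam j ≤ n := by
  rw [pIdx_high h hj1 hjm hkj]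
  omega

lemma pIdx_low_ge (h : IsKStrictRect n k m lam) {j : ℕ} (hj1 : 1 ≤ j) (hjm : j ≤ m)
    (hkj : lam j ≤ k) : n + 2 ≤ pIdx n k lam j := by
  rw [pIdx, if_pos hkj]
  omega

lemma card_filter_le (lam : ℕ → ℕ) (n k j : ℕ) :
    ((Finset.Ico 1 j).filter fun i => lam i + lam j ≤ 2 * k + j - i).card ≤ j - 1 := by
  calc ((Finset.Ico 1 j).filter fun i => lam i + lam j ≤ 2 * k + j - i).card
      ≤ (Finset.Ico 1 j).card := Finset.card_filter_le _ _
    _ = j - 1 := by rw [Nat.card_Ico]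

lemma pIdx_pos (h : IsKStrictRect n k m lam) {j : ℕ} (hj1 : 1 ≤ j) (hjm : j ≤ m) :
    1 ≤ pIdx n k lam j := by
  have hb : lam j ≤ n + k := lam_le h hj1 hjm
  rw [pIdx]
  omega

lemma pIdx_le (hkm : k + m = n) (h : IsKStrictRect n k m lam) {j : ℕ} (hj1 : 1 ≤ j)
    (hjm : j ≤ m) : pIdx n k lam j ≤ 2 * n + 1 := by
  by_cases hkj : k < lam j
  · have := pIdx_le_n h hj1 hjm hkj; omega
  · have hc := card_filter_le lam n k j
    rw [pIdx, if_pos (by omega)]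
    omega

lemma pIdx_ne (h : IsKStrictRect n k m lam) {j : ℕ} (hj1 : 1 ≤ j) (hjm : j ≤ m) :
    pIdx n k lam j ≠ n + 1 := by
  by_cases hkj : k < lam j
  · have := pIdx_le_n h hj1 hjm hkj; omega
  · have := pIdx_low_ge h hj1 hjm (by omega); omega

lemma pIdx_lt_succ (h : IsKStrictRect n k m lam) {j : ℕ} (hj1 : 1 ≤ j) (hjm : j + 1 ≤ m) :
    pIdx n k lam j < pIdx n k lam (j + 1) := by
  have hle : lam (j + 1) ≤ lam j := h.2.1 j (j + 1) hj1 (by omega) hjm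
  by_cases hcase : k < lam (j + 1)
  · have hkj : k < lam j := lt_of_lt_of_le hcase hle
    have hstrict : lam (j + 1) < lam j := h.2.2 j hj1 (by omega) hkj
    rw [pIdx_high h hj1 (by omega) hkj, pIdx_high h (by omega) hjm hcase]
    have hb : lam j ≤ n + k := lam_le h hj1 (by omega)
    omega
  · by_cases hcase2 : k < lam j
    · have h1 : pIdx n k lam j ≤ n := pIdx_le_n h hj1 (by omega) hcase2
      have h2 : n + 2 ≤ pIdx n k lam (j + 1) := pIdx_low_ge h (by omega) hjm (by omega)
      omega
    · -- both parts ≤ k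
      have hsub : insert j ((Finset.Ico 1 j).filter fun i => lam i + lam j ≤ 2 * k + j - i)
          ⊆ (Finset.Ico 1 (j + 1)).filter fun i => lam i + lam (j + 1) ≤ 2 * k + (j + 1) - i := by
        intro x hx
        rw [Finset.mem_insert] at hx
        rw [Finset.mem_filter, Finset.mem_Ico]
        rcases hx with rfl | hx
        · exact ⟨⟨hj1, by omega⟩, by omega⟩
        · rw [Finset.mem_filter, Finset.mem_Ico] at hx
          exact ⟨⟨hx.1.1, by omega⟩, by omega⟩
      have hnotmem : j ∉ (Finset.Ico 1 j).filter fun i => lam i + lam j ≤ 2 * k + j - i := by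
        intro hmem
        rw [Finset.mem_filter, Finset.mem_Ico] at hmem
        omega
      have hcard := Finset.card_le_card hsub
      rw [Finset.card_insert_of_notMem hnotmem] at hcard
      rw [pIdx, pIdx, if_pos (by omega : lam j ≤ k), if_pos (by omega : lam (j + 1) ≤ k)]
      have hb : lam j ≤ n + k := lam_le h hj1 (by omega)
      omega

lemma pIdx_mono (h : IsKStrictRect n k m lam) {i j : ℕ} (hi1 : 1 ≤ i) (hij : i < j)
    (hjm : j ≤ m) : pIdx n k lam i < pIdx n k lam j := by
  induction j, hij using Nat.le_induction with
  | base => exact pIdx_lt_succ h hi1 hjm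
  | succ j hij ih =>
    exact lt_trans (ih (by omega)) (pIdx_lt_succ h (by omega) hjm)

lemma no_pair (h : IsKStrictRect n k m lam) {i j : ℕ} (hi1 : 1 ≤ i) (hij : i < j)
    (hjm : j ≤ m) : pIdx n k lam i + pIdx n k lam j ≠ 2 * n + 2 := by
  have hle : lam j ≤ lam i := h.2.1 i j hi1 (by omega) hjm
  by_cases hki : k < lam i
  · by_cases hkj : k < lam j
    · have h1 := pIdx_le_n h hi1 (by omega) hki
      have h2 := pIdx_le_n h (by omega) hjm hkj
      omega
    · -- mixed case
      push_neg at hkj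
      have hpi : pIdx n k lam i = n + k + 1 - lam i := pIdx_high h hi1 (by omega) hki
      intro heq
      set c := ((Finset.Ico 1 j).filter fun i' => lam i' + lam j ≤ 2 * k + j - i').card with hc
      have hpj : pIdx n k lam j = n + k + 1 - lam j + c + 1 := by
        rw [pIdx, if_pos hkj]
      have hbi : lam i ≤ n + k := lam_le h hi1 (by omega)
      have key : lam i + lam j = 2 * k + 1 + c := by omega
      by_cases hcnt : lam i + lam j ≤ 2 * k + j - i
      · -- i is counted : then all of [i, j) is counted
        have hsub : Finset.Ico i j ⊆
            (Finset.Ico 1 j).filter fun i' => lam i' + lam j ≤ 2 * k + j - i' := by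
          intro x hx
          rw [Finset.mem_Ico] at hx
          rw [Finset.mem_filter, Finset.mem_Ico]
          refine ⟨⟨by omega, hx.2⟩, ?_⟩
          by_contra hxu
          push_neg at hxu
          have hxk : k < lam x := by omega
          have hxi : lam x + (x - i) ≤ lam i := strict_ge h hi1 hx.1 (by omega) hxk
          omega
        have hcard := Finset.card_le_card hsub
        rw [Nat.card_Ico] at hcard
        omega
      · -- i is uncounted : then everything counted lies in (i, j)
        push_neg at hcnt
        have hsub : ((Finset.Ico 1 j).filter fun i' => lam i' + lam j ≤ 2 * k + j - i')
            ⊆ Finset.Ico (i + 1) j := by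
          intro x hx
          rw [Finset.mem_filter, Finset.mem_Ico] at hx
          rw [Finset.mem_Ico]
          refine ⟨?_, hx.1.2⟩
          by_contra hxle
          push_neg at hxle
          have hxi : lam i + (i - x) ≤ lam x :=
            strict_ge h hx.1.1 (by omega) (by omega) hki
          omega
        have hcard := Finset.card_le_card hsub
        rw [Nat.card_Ico] at hcard
        omega
  · -- lam i ≤ k, hence lam j ≤ k : both indices ≥ n+2
    have h1 := pIdx_low_ge h hi1 (by omega) (by omega)
    have h2 := pIdx_low_ge h (by omega) hjm (by omega)
    omega

lemma pIdx_strict_anti {j : ℕ} (hpre : ∀ i, 1 ≤ i → i < j → lam i = mu i)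
    (hlt : lam j < mu j) (hb : mu j ≤ n + k) : pIdx n k mu j < pIdx n k lam j := by
  have hsub : ((Finset.Ico 1 j).filter fun i => mu i + mu j ≤ 2 * k + j - i)
      ⊆ (Finset.Ico 1 j).filter fun i => lam i + lam j ≤ 2 * k + j - i := by
    intro x hx
    rw [Finset.mem_filter, Finset.mem_Ico] at hx ⊢
    have := hpre x hx.1.1 hx.1.2
    exact ⟨hx.1, by omega⟩
  have hcard := Finset.card_le_card hsub
  rw [pIdx, pIdx]
  split_ifs with h1 h2 h3 <;> omega

lemma inj (hl : IsKStrictRect n k m lam) (hmu : IsKStrictRect n k m mu)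
    (hp : ∀ j, 1 ≤ j → j ≤ m → pIdx n k lam j = pIdx n k mu j) :
    ∀ j, 1 ≤ j → j ≤ m → lam j = mu j := by
  intro j
  induction j using Nat.strong_induction_on with
  | _ j ih =>
    intro hj1 hjm
    have hpre : ∀ i, 1 ≤ i → i < j → lam i = mu i := fun i h1 h2 => ih i h2 h1 (by omega)
    rcases lt_trichotomy (lam j) (mu j) with hlt | heq | hgt
    · have := pIdx_strict_anti hpre hlt (lam_le hmu hj1 hjm)
      have := hp j hj1 hjm
      omega
    · exact heq
    · have hpre' : ∀ i, 1 ≤ i → i < j → mu i = lam i := fun i h1 h2 => (hpre i h1 h2).symm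
      have := pIdx_strict_anti hpre' hgt (lam_le hl hj1 hjm)
      have := hp j hj1 hjm
      omega

end StmtAux

/-- For `OG(m, 2n+1)` with `1 ≤ m ≤ n`, `k = n - m`, the map
`λ ↦ (p₁(λ) < ⋯ < p_m(λ))` is injective (on `k`-strict partitions in the `m × (n+k)`
rectangle), and lands in the set of strictly increasing `m`-tuples in `[1, 2n+1]` with
`p_i + p_j ≠ 2n+2` for `i ≠ j` and avoiding `n+1`. -/
theorem stmt_15 (n m k : ℕ) (hn : 2 ≤ n) (hm : 1 ≤ m) (hmn : m ≤ n) (hk : k = n - m) :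
    (∀ lam mu : ℕ → ℕ, IsKStrictRect n k m lam → IsKStrictRect n k m mu →
      (∀ j, 1 ≤ j → j ≤ m → pIdx n k lam j = pIdx n k mu j) →
      ∀ j, 1 ≤ j → j ≤ m → lam j = mu j) ∧
    (∀ lam : ℕ → ℕ, IsKStrictRect n k m lam →
      (∀ i j, 1 ≤ i → i < j → j ≤ m → pIdx n k lam i < pIdx n k lam j) ∧
      (∀ j, 1 ≤ j → j ≤ m → 1 ≤ pIdx n k lam j ∧ pIdx n k lam j ≤ 2 * n + 1) ∧
      (∀ i j, 1 ≤ i → i ≤ m → 1 ≤ j → j ≤ m → i ≠ j →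
        pIdx n k lam i + pIdx n k lam j ≠ 2 * n + 2) ∧
      (∀ j, 1 ≤ j → j ≤ m → pIdx n k lam j ≠ n + 1)) := by
  have hkm : k + m = n := by omega
  constructor
  · exact fun lam mu hl hmu hp => StmtAux.inj hl hmu hp
  · intro lam h
    refine ⟨fun i j hi1 hij hjm => StmtAux.pIdx_mono h hi1 hij hjm,
      fun j hj1 hjm => ⟨StmtAux.pIdx_pos h hj1 hjm, StmtAux.pIdx_le hkm h hj1 hjm⟩,
      ?_, fun j hj1 hjm => StmtAux.pIdx_ne h hj1 hjm⟩
    intro i j hi1 him hj1 hjm hne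
    rcases lt_or_gt_of_ne hne with hij | hij
    · exact StmtAux.no_pair h hi1 hij hjm
    · have := StmtAux.no_pair h hj1 hij him
      omega
end

section
/- Let X = OG(m, 2n+1) with 1 ≤ m < n, k = n-m, and let λ, μ be k-strict partitions in the m×(n+k) rectangle with |λ| + |μ| ≤ 2n - 1. Then the dual index set 𝒫^∨(λ), defined by p_j^∨ = 2n+2 - p_{m+1-j}(λ), satisfies p_j^∨ ≤ p_j(μ) for all 1 ≤ j ≤ m. -/
open Finset

def pairSet (k : ℕ) (nu : ℕ → ℕ) (j : ℕ) : Finset ℕ :=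
  (Ico 1 j).filter fun i => nu i + nu j ≤ 2 * k + j - i

lemma pIdx_eq_card_pairSet (n k : ℕ) (nu : ℕ → ℕ) (j : ℕ) :
    pIdx n k nu j = n + k + 1 - nu j + (pairSet k nu j).card + if nu j ≤ k then 1 else 0 :=
  rfl

lemma card_pairSet_le (k : ℕ) (nu : ℕ → ℕ) (j : ℕ) : (pairSet k nu j).card ≤ j - 1 :=
  (card_filter_le _ _).trans (Nat.card_Ico 1 j).le

lemma mul_le_sum_Ioc {f : ℕ → ℕ} {a b c : ℕ} (h : ∀ i ∈ Ioc a b, c ≤ f i) :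
    (b - a) * c ≤ ∑ i ∈ Ioc a b, f i := by
  simpa [Nat.card_Ioc] using card_nsmul_le_sum _ _ _ h

section KStrict

variable {m k : ℕ} {nu : ℕ → ℕ}

lemma mul_apply_le_sum_Ioc {j : ℕ}
    (hdec : ∀ i j, 1 ≤ i → i ≤ j → j ≤ m → nu j ≤ nu i) (hjm : j ≤ m) :
    j * nu j ≤ ∑ i ∈ Ioc 0 m, nu i :=
  calc j * nu j = (j - 0) * nu j := by rw [Nat.sub_zero]
    _ ≤ ∑ i ∈ Ioc 0 j, nu i := mul_le_sum_Ioc fun i hi => by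
        rw [mem_Ioc] at hi
        exact hdec i j hi.1 hi.2 hjm
    _ ≤ ∑ i ∈ Ioc 0 m, nu i := sum_le_sum_of_subset (Ioc_subset_Ioc_right hjm)

lemma apply_add_add_le_apply (hdec : ∀ i j, 1 ≤ i → i ≤ j → j ≤ m → nu j ≤ nu i)
    (hstrict : ∀ j, 1 ≤ j → j < m → k < nu j → nu (j + 1) < nu j)
    (d : ℕ) {s : ℕ} (hs : 1 ≤ s) (hsd : s + d ≤ m) (hk : k < nu (s + d)) :
    nu (s + d) + d ≤ nu s := by
  induction d generalizing s with
  | zero => simp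
  | succ d ih =>
    have hshift : s + 1 + d = s + (d + 1) := by omega
    have hnext := ih (s := s + 1) (by omega) (by omega) (by rwa [hshift])
    rw [hshift] at hnext
    have hdesc := hdec s (s + 1) hs (by omega) (by omega)
    have hstep := hstrict s hs (by omega) (by omega)
    omega

lemma mem_pairSet_of_le (hdec : ∀ i j, 1 ≤ i → i ≤ j → j ≤ m → nu j ≤ nu i)
    (hstrict : ∀ j, 1 ≤ j → j < m → k < nu j → nu (j + 1) < nu j)
    {i i' j : ℕ} (hjm : j ≤ m) (hsmall : nu j ≤ k) (hi : i ∈ pairSet k nu j) (hii' : i ≤ i')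
    (hi'j : i' < j) : i' ∈ pairSet k nu j := by
  simp only [pairSet, mem_filter, mem_Ico] at hi ⊢
  refine ⟨⟨by omega, hi'j⟩, ?_⟩
  by_contra hi'
  have hchain := apply_add_add_le_apply hdec hstrict (i' - i) hi.1.1 (by omega)
    (by rw [Nat.add_sub_cancel' hii']; omega)
  rw [Nat.add_sub_cancel' hii'] at hchain
  omega

lemma lt_add_of_add_card_pairSet_lt (hdec : ∀ i j, 1 ≤ i → i ≤ j → j ≤ m → nu j ≤ nu i)
    (hstrict : ∀ j, 1 ≤ j → j < m → k < nu j → nu (j + 1) < nu j)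
    {i j : ℕ} (hjm : j ≤ m) (hsmall : nu j ≤ k) (hi : 1 ≤ i)
    (hiC : i + (pairSet k nu j).card < j) :
    2 * k + (pairSet k nu j).card + 1 < nu i + nu j := by
  have hi_not : i ∉ pairSet k nu j := by
    intro hi_mem
    have hsub : Ico i j ⊆ pairSet k nu j := fun i' hi' => by
      rw [mem_Ico] at hi'
      exact mem_pairSet_of_le hdec hstrict hjm hsmall hi_mem hi'.1 hi'.2
    have := card_le_card hsub
    rw [Nat.card_Ico] at this
    omega
  simp only [pairSet, mem_filter, mem_Ico, not_and, not_le] at hi_not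
  have := hi_not ⟨hi, by omega⟩
  omega

lemma mul_add_mul_le_sum_Ioc (hdec : ∀ i j, 1 ≤ i → i ≤ j → j ≤ m → nu j ≤ nu i)
    (hstrict : ∀ j, 1 ≤ j → j < m → k < nu j → nu (j + 1) < nu j)
    {j : ℕ} (hj : 1 ≤ j) (hjm : j ≤ m) (hsmall : nu j ≤ k) :
    (j - 1 - (pairSet k nu j).card) * (2 * k + (pairSet k nu j).card + 2 - nu j)
      + ((pairSet k nu j).card + 1) * nu j ≤ ∑ i ∈ Ioc 0 m, nu i := by
  set C := (pairSet k nu j).card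
  set P := j - 1 - C
  have hCj : C < j := by have := card_pairSet_le k nu j; omega
  have hlow : (P - 0) * (2 * k + C + 2 - nu j) ≤ ∑ i ∈ Ioc 0 P, nu i :=
    mul_le_sum_Ioc fun i hi => by
      rw [mem_Ioc] at hi
      have := lt_add_of_add_card_pairSet_lt hdec hstrict hjm hsmall hi.1 (by omega)
      omega
  have hhigh : (j - P) * nu j ≤ ∑ i ∈ Ioc P j, nu i :=
    mul_le_sum_Ioc fun i hi => by
      rw [mem_Ioc] at hi
      exact hdec i j (by omega) hi.2 hjm
  have hsplit := sum_Ioc_consecutive nu (Nat.zero_le P) (show P ≤ j by omega)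
  have hsub := sum_le_sum_of_subset (f := nu) (Ioc_subset_Ioc_right hjm : Ioc 0 j ⊆ Ioc 0 m)
  rw [Nat.sub_zero] at hlow
  rw [show j - P = C + 1 by omega] at hhigh
  omega

end KStrict

lemma add_le_two_mul_add_card_pairSet {m k j j' : ℕ} {nu rho : ℕ → ℕ}
    (hnutop : nu 1 ≤ m + 2 * k)
    (hnudec : ∀ i j, 1 ≤ i → i ≤ j → j ≤ m → nu j ≤ nu i)
    (hrhodec : ∀ i j, 1 ≤ i → i ≤ j → j ≤ m → rho j ≤ rho i)
    (hrhostrict : ∀ j, 1 ≤ j → j < m → k < rho j → rho (j + 1) < rho j)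
    (hsum : ∑ i ∈ Ioc 0 m, nu i + ∑ i ∈ Ioc 0 m, rho i < 2 * (m + k))
    (hj : 1 ≤ j) (hj' : 1 ≤ j') (hjj' : j + j' = m + 1) (hsmall : rho j' ≤ k) :
    nu j + rho j' ≤ 2 * k + 1 + (pairSet k rho j').card := by
  have htop : nu j ≤ m + 2 * k := (hnudec 1 j le_rfl hj (by omega)).trans hnutop
  have hnu : j * nu j ≤ ∑ i ∈ Ioc 0 m, nu i := mul_apply_le_sum_Ioc hnudec (by omega)
  have hrho := mul_add_mul_le_sum_Ioc hrhodec hrhostrict hj' (by omega) hsmall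
  have hCj' := card_pairSet_le k rho j'
  generalize (pairSet k rho j').card = C at *
  generalize nu j = a at *
  generalize rho j' = b at *
  by_contra! hcon
  obtain ⟨w, rfl⟩ : ∃ w, k = b + w := ⟨k - b, by omega⟩
  obtain ⟨q, hq⟩ : ∃ q, j + (j' - 1 - C) = q + 1 := ⟨j + (j' - 1 - C) - 1, by omega⟩
  have ht : 2 * (b + w) + C + 2 - b = b + 2 * w + C + 2 := by omega
  rw [ht] at hrho
  have hja : j * (b + 2 * w + C + 2) ≤ j * a := Nat.mul_le_mul_left j (by omega)
  -- Left minus right side of `hqt` is `q (b + 2w) + C (q + b - 1)`, and `q + b ≥ 1` since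
  -- otherwise `j = 1` and `a ≥ 2k + C + 2 = 2k + m + 1` would leave the rectangle.
  have hqb : C * 1 ≤ C * (q + b) := Nat.mul_le_mul_left C (by omega)
  have hqt : (q + 1) * (b + 2 * w + C + 2) + (C + 1) * b < 2 * (q + 1 + C + b + w) := by
    rw [← hq, Nat.add_mul]
    omega
  nlinarith

lemma two_mul_add_le_sum_of_lt {m k j j' : ℕ} {nu rho : ℕ → ℕ} (hk : 1 ≤ k)
    (hnudec : ∀ i j, 1 ≤ i → i ≤ j → j ≤ m → nu j ≤ nu i)
    (hrhodec : ∀ i j, 1 ≤ i → i ≤ j → j ≤ m → rho j ≤ rho i)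
    (hj : 1 ≤ j) (hj' : 1 ≤ j') (hjj' : j + j' = m + 1) (hnu : k < nu j) (hrho : k < rho j') :
    2 * (m + k) ≤ ∑ i ∈ Ioc 0 m, nu i + ∑ i ∈ Ioc 0 m, rho i := by
  have h₁ : j * (k + 1) ≤ ∑ i ∈ Ioc 0 m, nu i :=
    (Nat.mul_le_mul_left j hnu).trans (mul_apply_le_sum_Ioc hnudec (by omega))
  have h₂ : j' * (k + 1) ≤ ∑ i ∈ Ioc 0 m, rho i :=
    (Nat.mul_le_mul_left j' hrho).trans (mul_apply_le_sum_Ioc hrhodec (by omega))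
  have hm : (m + 1) * (k + 1) = j * (k + 1) + j' * (k + 1) := by rw [← hjj', Nat.add_mul]
  nlinarith

theorem stmt_18_general (n m k : ℕ) (hmn : m < n) (hk : k = n - m)
    (lam mu : ℕ → ℕ)
    (hlamtop : lam 1 ≤ n + k) (hmutop : mu 1 ≤ n + k)
    (hlamdec : ∀ i j, 1 ≤ i → i ≤ j → j ≤ m → lam j ≤ lam i)
    (hmudec : ∀ i j, 1 ≤ i → i ≤ j → j ≤ m → mu j ≤ mu i)
    (hlamstrict : ∀ j, 1 ≤ j → j < m → k < lam j → lam (j + 1) < lam j)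
    (hmustrict : ∀ j, 1 ≤ j → j < m → k < mu j → mu (j + 1) < mu j)
    (hsum : (∑ i ∈ Finset.Icc 1 m, lam i) + (∑ i ∈ Finset.Icc 1 m, mu i) ≤ 2 * n - 1) :
    ∀ j, 1 ≤ j → j ≤ m → 2 * n + 2 ≤ pIdx n k mu j + pIdx n k lam (m + 1 - j) := by
  intro j hj hjm
  have hn : n = m + k := by omega
  have hIcc : Icc 1 m = Ioc 0 m := Icc_add_one_left_eq_Ioc 0 m
  rw [hIcc] at hsum
  have hsum' : ∑ i ∈ Ioc 0 m, lam i + ∑ i ∈ Ioc 0 m, mu i < 2 * (m + k) := by omega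
  have hmuj : mu j ≤ n + k := (hmudec 1 j le_rfl hj hjm).trans hmutop
  have hlamj : lam (m + 1 - j) ≤ n + k :=
    (hlamdec 1 _ le_rfl (by omega) (by omega)).trans hlamtop
  rw [pIdx_eq_card_pairSet, pIdx_eq_card_pairSet]
  by_cases hmu : mu j ≤ k
  · have := add_le_two_mul_add_card_pairSet (k := k) (j := m + 1 - j) (by omega) hlamdec hmudec
      hmustrict hsum' (by omega) hj (by omega) hmu
    split_ifs <;> omega
  by_cases hlam : lam (m + 1 - j) ≤ k
  · have := add_le_two_mul_add_card_pairSet (k := k) (by omega) hmudec hlamdec hlamstrict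
      (by omega) hj (by omega) (by omega) hlam
    rw [if_neg hmu, if_pos hlam]
    omega
  have := two_mul_add_le_sum_of_lt (by omega) hmudec hlamdec hj (show 1 ≤ m + 1 - j by omega)
    (by omega) (not_le.mp hmu) (not_le.mp hlam)
  omega

/-- Let `X = OG(m, 2n+1)` with `1 ≤ m < n`, `k = n - m`, and let `λ, μ` be `k`-strict
partitions in the `m × (n+k)` rectangle with `|λ| + |μ| ≤ 2n - 1`.  Then the dual index
set, `p_j^∨ = 2n + 2 - p_{m+1-j}(λ)`, satisfies `p_j^∨ ≤ p_j(μ)` for all `1 ≤ j ≤ m`. -/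
theorem stmt_18 (n m k : ℕ) (hm : 1 ≤ m) (hmn : m < n) (hk : k = n - m)
    (lam mu : ℕ → ℕ)
    (hlamtop : lam 1 ≤ n + k) (hmutop : mu 1 ≤ n + k)
    (hlamdec : ∀ i j, 1 ≤ i → i ≤ j → j ≤ m → lam j ≤ lam i)
    (hmudec : ∀ i j, 1 ≤ i → i ≤ j → j ≤ m → mu j ≤ mu i)
    (hlamstrict : ∀ j, 1 ≤ j → j < m → k < lam j → lam (j + 1) < lam j)
    (hmustrict : ∀ j, 1 ≤ j → j < m → k < mu j → mu (j + 1) < mu j)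
    (hsum : (∑ i ∈ Finset.Icc 1 m, lam i) + (∑ i ∈ Finset.Icc 1 m, mu i) ≤ 2 * n - 1) :
    ∀ j, 1 ≤ j → j ≤ m → 2 * n + 2 ≤ pIdx n k mu j + pIdx n k lam (m + 1 - j) :=
  stmt_18_general n m k hmn hk lam mu hlamtop hmutop hlamdec hmudec hlamstrict hmustrict hsum
end
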